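/- For every integer t ≥ 3, the equitable dominator chromatic number of the line graph of the flower graph F_{1,t} equals 2t, i.e., χ_ed(L(F_{1,t})) = 2t. -/
import Mathlib


open SimpleGraph

/-- `c` is an equitable dominator coloring of `G` with `n` colors: it is a proper vertex
coloring, every vertex dominates some nonempty color class (each vertex of that class lies in
its closed neighborhood), and any two color classes differ in cardinality by at most 1. -/
def IsEDColoring {V : Type*} (G : SimpleGraph V) {n : ℕ} (c : V → Fin n) : Prop :=
  (∀ ⦃u v : V⦄, G.Adj u v → c u ≠ c v) ∧
  (∀ v : V, ∃ j : Fin n, (∃ u, c u = j) ∧ ∀ u, c u = j → u = v ∨ G.Adj v u) ∧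
  (∀ i j : Fin n, {u | c u = i}.ncard ≤ {u | c u = j}.ncard + 1)

/-- The equitable dominator chromatic number of `G`: the least number of colors admitting an
equitable dominator coloring of `G`. -/
noncomputable def edcn {V : Type*} (G : SimpleGraph V) : ℕ :=
  sInf {n : ℕ | ∃ c : V → Fin n, IsEDColoring G c}
/-- The flower graph `F_{1,t}`: obtained from the helm graph (center `none`, rim vertices
`some (Sum.inl i)`, pendant vertices `some (Sum.inr i)`) by joining every pendant vertex to
the center, which thus becomes a universal vertex. -/
def flower (t : ℕ) : SimpleGraph (Option (ZMod t ⊕ ZMod t)) :=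
  SimpleGraph.fromRel (fun x y =>
    (∃ z : ZMod t ⊕ ZMod t, x = none ∧ y = some z) ∨
    (∃ i : ZMod t, x = some (Sum.inl i) ∧ y = some (Sum.inl (i + 1))) ∨
    (∃ i : ZMod t, x = some (Sum.inl i) ∧ y = some (Sum.inr i)))

/-! ### Auxiliary definitions -/

abbrev FV (t : ℕ) := Option (ZMod t ⊕ ZMod t)

/-- Spoke from center to rim vertex `i`. -/
def sr (t : ℕ) (i : ZMod t) : Sym2 (FV t) := s(none, some (Sum.inl i))
/-- Spoke from center to pendant vertex `i`. -/
def sp (t : ℕ) (i : ZMod t) : Sym2 (FV t) := s(none, some (Sum.inr i))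
/-- Cycle edge from rim vertex `i` to rim vertex `i+1`. -/
def ce (t : ℕ) (i : ZMod t) : Sym2 (FV t) := s(some (Sum.inl i), some (Sum.inl (i+1)))
/-- Pendant edge from rim vertex `i` to pendant vertex `i`. -/
def pe (t : ℕ) (i : ZMod t) : Sym2 (FV t) := s(some (Sum.inl i), some (Sum.inr i))

def fcol (t : ℕ) : FV t → FV t → ℕ
  | none, none => 0
  | none, some (Sum.inl i) => (i-1).val
  | some (Sum.inl i), none => (i-1).val
  | none, some (Sum.inr i) => t + i.val
  | some (Sum.inr i), none => t + i.val
  | some (Sum.inl i), some (Sum.inl j) =>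
      if i.val + 1 = j.val ∨ j.val + 1 = i.val then t + min i.val j.val else t + max i.val j.val
  | some (Sum.inl _), some (Sum.inr j) => j.val
  | some (Sum.inr j), some (Sum.inl _) => j.val
  | some (Sum.inr _), some (Sum.inr _) => 0

lemma fcol_symm (t : ℕ) : ∀ x y, fcol t x y = fcol t y x := by
  rintro (_|⟨i|i⟩) (_|⟨j|j⟩) <;> simp [fcol, min_comm, max_comm, or_comm]

def colNat (t : ℕ) : Sym2 (FV t) → ℕ := Sym2.lift ⟨fcol t, fcol_symm t⟩

@[simp] lemma colNat_sr (t : ℕ) (i : ZMod t) : colNat t (sr t i) = (i-1).val := rfl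
@[simp] lemma colNat_sp (t : ℕ) (i : ZMod t) : colNat t (sp t i) = t + i.val := rfl
@[simp] lemma colNat_pe (t : ℕ) (i : ZMod t) : colNat t (pe t i) = i.val := rfl

lemma colNat_ce (t : ℕ) (ht : 3 ≤ t) (i : ZMod t) : colNat t (ce t i) = t + i.val := by
  haveI : NeZero t := ⟨by omega⟩
  haveI : Fact (1 < t) := ⟨by omega⟩
  have hi : i.val < t := ZMod.val_lt i
  have h1 : (i+1).val = (i.val + 1) % t := by
    rw [ZMod.val_add, ZMod.val_one]
  show (if i.val + 1 = (i+1).val ∨ (i+1).val + 1 = i.val then t + min i.val (i+1).val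
    else t + max i.val (i+1).val) = t + i.val
  rcases Nat.lt_or_ge (i.val + 1) t with h | h
  · rw [h1, Nat.mod_eq_of_lt h]
    simp [Nat.le_succ]
  · have : i.val + 1 = t := by omega
    rw [h1, this, Nat.mod_self]
    have h2 : ¬ (t = 0 ∨ 0 + 1 = i.val) := by omega
    rw [if_neg h2]
    omega

/-! ### Edge classification and membership -/

lemma edge_cases {t : ℕ} {e : Sym2 (FV t)} (he : e ∈ (flower t).edgeSet) :
    (∃ i, e = sr t i) ∨ (∃ i, e = sp t i) ∨ (∃ i, e = ce t i) ∨ (∃ i, e = pe t i) := by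
  induction e using Sym2.ind with
  | _ x y =>
    rw [SimpleGraph.mem_edgeSet, flower, fromRel_adj] at he
    obtain ⟨hne, h | h⟩ := he <;>
      rcases h with ⟨z, hx, hy⟩ | ⟨i, hx, hy⟩ | ⟨i, hx, hy⟩ <;> subst hx <;> subst hy
    · rcases z with i | i
      · exact Or.inl ⟨i, rfl⟩
      · exact Or.inr (Or.inl ⟨i, rfl⟩)
    · exact Or.inr (Or.inr (Or.inl ⟨i, rfl⟩))
    · exact Or.inr (Or.inr (Or.inr ⟨i, rfl⟩))
    · rcases z with i | i
      · exact Or.inl ⟨i, Sym2.eq_swap⟩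
      · exact Or.inr (Or.inl ⟨i, Sym2.eq_swap⟩)
    · exact Or.inr (Or.inr (Or.inl ⟨i, Sym2.eq_swap⟩))
    · exact Or.inr (Or.inr (Or.inr ⟨i, Sym2.eq_swap⟩))

lemma sr_mem {t : ℕ} (i : ZMod t) : sr t i ∈ (flower t).edgeSet := by
  rw [sr, SimpleGraph.mem_edgeSet, flower, fromRel_adj]
  exact ⟨by simp, Or.inl (Or.inl ⟨Sum.inl i, rfl, rfl⟩)⟩

lemma sp_mem {t : ℕ} (i : ZMod t) : sp t i ∈ (flower t).edgeSet := by
  rw [sp, SimpleGraph.mem_edgeSet, flower, fromRel_adj]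
  exact ⟨by simp, Or.inl (Or.inl ⟨Sum.inr i, rfl, rfl⟩)⟩

lemma ce_mem {t : ℕ} (ht : 3 ≤ t) (i : ZMod t) : ce t i ∈ (flower t).edgeSet := by
  haveI : Fact (1 < t) := ⟨by omega⟩
  rw [ce, SimpleGraph.mem_edgeSet, flower, fromRel_adj]
  refine ⟨?_, Or.inl (Or.inr (Or.inl ⟨i, rfl, rfl⟩))⟩
  simp only [ne_eq, Option.some.injEq, Sum.inl.injEq, left_eq_add]
  exact one_ne_zero

lemma pe_mem {t : ℕ} (i : ZMod t) : pe t i ∈ (flower t).edgeSet := by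
  rw [pe, SimpleGraph.mem_edgeSet, flower, fromRel_adj]
  exact ⟨by simp, Or.inl (Or.inr (Or.inr ⟨i, rfl, rfl⟩))⟩

lemma colNat_lt {t : ℕ} (ht : 3 ≤ t) {e : Sym2 (FV t)} (he : e ∈ (flower t).edgeSet) :
    colNat t e < 2 * t := by
  haveI : NeZero t := ⟨by omega⟩
  rcases edge_cases he with ⟨i, rfl⟩ | ⟨i, rfl⟩ | ⟨i, rfl⟩ | ⟨i, rfl⟩
  · have := ZMod.val_lt (i - 1); simp; omega
  · have := ZMod.val_lt i; simp; omega
  · have := ZMod.val_lt i; rw [colNat_ce t ht]; omega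
  · have := ZMod.val_lt i; simp; omega

/-! ### Color class characterization -/

lemma classA {t : ℕ} (ht : 3 ≤ t) {e : Sym2 (FV t)} (he : e ∈ (flower t).edgeSet)
    (i : ZMod t) (h : colNat t e = i.val) : e = sr t (i+1) ∨ e = pe t i := by
  haveI : NeZero t := ⟨by omega⟩
  have hi : i.val < t := ZMod.val_lt i
  rcases edge_cases he with ⟨j, rfl⟩ | ⟨j, rfl⟩ | ⟨j, rfl⟩ | ⟨j, rfl⟩
  · left
    have : j - 1 = i := ZMod.val_injective t (by simpa using h)
    rw [← this]; ring_nf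
  · rw [colNat_sp] at h; omega
  · rw [colNat_ce t ht] at h; omega
  · right
    have : j = i := ZMod.val_injective t (by simpa using h)
    rw [this]

lemma classB {t : ℕ} (ht : 3 ≤ t) {e : Sym2 (FV t)} (he : e ∈ (flower t).edgeSet)
    (i : ZMod t) (h : colNat t e = t + i.val) : e = sp t i ∨ e = ce t i := by
  haveI : NeZero t := ⟨by omega⟩
  rcases edge_cases he with ⟨j, rfl⟩ | ⟨j, rfl⟩ | ⟨j, rfl⟩ | ⟨j, rfl⟩
  · have := ZMod.val_lt (j - 1); rw [colNat_sr] at h; omega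
  · left
    have : j = i := ZMod.val_injective t (by rw [colNat_sp] at h; omega)
    rw [this]
  · right
    have : j = i := ZMod.val_injective t (by rw [colNat_ce t ht] at h; omega)
    rw [this]
  · have := ZMod.val_lt j; rw [colNat_pe] at h; omega

/-! ### Distinctness and disjointness -/

lemma sr_ne_sp {t : ℕ} (i j : ZMod t) : sr t i ≠ sp t j := by simp [sr, sp, Sym2.eq_iff]
lemma sr_ne_ce {t : ℕ} (i j : ZMod t) : sr t i ≠ ce t j := by simp [sr, ce, Sym2.eq_iff]
lemma sr_ne_pe {t : ℕ} (i j : ZMod t) : sr t i ≠ pe t j := by simp [sr, pe, Sym2.eq_iff]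
lemma sp_ne_ce {t : ℕ} (i j : ZMod t) : sp t i ≠ ce t j := by simp [sp, ce, Sym2.eq_iff]
lemma sp_ne_pe {t : ℕ} (i j : ZMod t) : sp t i ≠ pe t j := by simp [sp, pe, Sym2.eq_iff]
lemma ce_ne_pe {t : ℕ} (i j : ZMod t) : ce t i ≠ pe t j := by simp [ce, pe, Sym2.eq_iff]

lemma disjA {t : ℕ} (ht : 3 ≤ t) (i : ZMod t) (x : FV t)
    (h1 : x ∈ sr t (i+1)) (h2 : x ∈ pe t i) : False := by
  haveI : Fact (1 < t) := ⟨by omega⟩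
  simp only [sr, pe, Sym2.mem_iff] at h1 h2
  rcases h1 with rfl | rfl <;> rcases h2 with h | h <;> simp_all

lemma disjB {t : ℕ} (ht : 3 ≤ t) (i : ZMod t) (x : FV t)
    (h1 : x ∈ sp t i) (h2 : x ∈ ce t i) : False := by
  simp only [sp, ce, Sym2.mem_iff] at h1 h2
  rcases h1 with rfl | rfl <;> rcases h2 with h | h <;> simp_all

theorem edcn_lineGraph_flower (t : ℕ) (ht : 3 ≤ t) :
    edcn (flower t).lineGraph = 2 * t := by
  haveI : NeZero t := ⟨by omega⟩
  haveI : Fact (1 < t) := ⟨by omega⟩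
  -- the coloring
  set G := (flower t).lineGraph with hG
  let c : (flower t).edgeSet → Fin (2*t) := fun e => ⟨colNat t e.val, colNat_lt ht e.prop⟩
  -- class characterization as sets of subtype elements
  have hclassA : ∀ i : ZMod t,
      {u : (flower t).edgeSet | c u = ⟨i.val, by have := ZMod.val_lt i; omega⟩} =
        {⟨sr t (i+1), sr_mem _⟩, ⟨pe t i, pe_mem _⟩} := by
    intro i
    ext u
    simp only [Set.mem_setOf_eq, Set.mem_insert_iff, Set.mem_singleton_iff]
    constructor
    · intro h
      have h' : colNat t u.val = i.val := congrArg Fin.val h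
      rcases classA ht u.prop i h' with h | h
      · exact Or.inl (Subtype.ext h)
      · exact Or.inr (Subtype.ext h)
    · rintro (rfl | rfl)
      · apply Fin.ext
        show colNat t (sr t (i+1)) = i.val
        rw [colNat_sr]; ring_nf
      · apply Fin.ext
        show colNat t (pe t i) = i.val
        rw [colNat_pe]
  have hclassB : ∀ i : ZMod t,
      {u : (flower t).edgeSet | c u = ⟨t + i.val, by have := ZMod.val_lt i; omega⟩} =
        {⟨sp t i, sp_mem _⟩, ⟨ce t i, ce_mem ht _⟩} := by
    intro i
    ext u
    simp only [Set.mem_setOf_eq, Set.mem_insert_iff, Set.mem_singleton_iff]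
    constructor
    · intro h
      have h' : colNat t u.val = t + i.val := congrArg Fin.val h
      rcases classB ht u.prop i h' with h | h
      · exact Or.inl (Subtype.ext h)
      · exact Or.inr (Subtype.ext h)
    · rintro (rfl | rfl)
      · apply Fin.ext
        show colNat t (sp t i) = t + i.val
        rw [colNat_sp]
      · apply Fin.ext
        show colNat t (ce t i) = t + i.val
        rw [colNat_ce t ht]
  -- every color class has exactly two elements
  have hncard : ∀ k : Fin (2*t), {u : (flower t).edgeSet | c u = k}.ncard = 2 := by
    intro k
    rcases Nat.lt_or_ge k.val t with hk | hk
    · set i : ZMod t := (k.val : ZMod t) with hi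
      have hiv : i.val = k.val := ZMod.val_cast_of_lt hk
      have : k = ⟨i.val, by have := ZMod.val_lt i; omega⟩ := by
        apply Fin.ext; simp [hiv]
      rw [this, hclassA i]
      exact Set.ncard_pair (by
        intro h
        exact sr_ne_pe (i+1) i (congrArg Subtype.val h))
    · set i : ZMod t := ((k.val - t : ℕ) : ZMod t) with hi
      have hk2 := k.isLt
      have hiv : i.val = k.val - t := ZMod.val_cast_of_lt (by omega)
      have : k = ⟨t + i.val, by have := ZMod.val_lt i; omega⟩ := by
        apply Fin.ext; simp [hiv]; omega
      rw [this, hclassB i]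
      exact Set.ncard_pair (by
        intro h
        exact sp_ne_ce i i (congrArg Subtype.val h))
  -- upper bound: 2t ∈ the set
  have hmem : 2 * t ∈ {n : ℕ | ∃ c : (flower t).edgeSet → Fin n, IsEDColoring G c} := by
    refine ⟨c, ?_, ?_, ?_⟩
    · -- properness
      intro u v huv hcc
      rw [hG, lineGraph_adj_iff_exists] at huv
      obtain ⟨hne, x, hxu, hxv⟩ := huv
      have hx : colNat t u.val = colNat t v.val := congrArg Fin.val hcc
      rcases Nat.lt_or_ge (colNat t u.val) t with hk | hk
      · set i : ZMod t := ((colNat t u.val : ℕ) : ZMod t) with hi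
        have hiv : i.val = colNat t u.val := ZMod.val_cast_of_lt hk
        rcases classA ht u.prop i hiv.symm with h1 | h1 <;>
          rcases classA ht v.prop i (by rw [← hx]; exact hiv.symm) with h2 | h2
        · exact hne (Subtype.ext (h1.trans h2.symm))
        · exact disjA ht i x (h1 ▸ hxu) (h2 ▸ hxv)
        · exact disjA ht i x (h2 ▸ hxv) (h1 ▸ hxu)
        · exact hne (Subtype.ext (h1.trans h2.symm))
      · have hk2 := colNat_lt ht u.prop
        set i : ZMod t := ((colNat t u.val - t : ℕ) : ZMod t) with hi
        have hiv : colNat t u.val = t + i.val := by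
          rw [ZMod.val_cast_of_lt (by omega)]; omega
        rcases classB ht u.prop i hiv with h1 | h1 <;>
          rcases classB ht v.prop i (by rw [← hx]; exact hiv) with h2 | h2
        · exact hne (Subtype.ext (h1.trans h2.symm))
        · exact disjB ht i x (h1 ▸ hxu) (h2 ▸ hxv)
        · exact disjB ht i x (h2 ▸ hxv) (h1 ▸ hxu)
        · exact hne (Subtype.ext (h1.trans h2.symm))
    · -- domination
      intro v
      rcases edge_cases v.prop with ⟨i, hv⟩ | ⟨i, hv⟩ | ⟨i, hv⟩ | ⟨i, hv⟩
      · -- v = sr i dominates class B i = {sp i, ce i}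
        refine ⟨⟨t + i.val, by have := ZMod.val_lt i; omega⟩,
          ⟨⟨sp t i, sp_mem _⟩, by apply Fin.ext; show colNat t (sp t i) = t + i.val; simp⟩, ?_⟩
        intro u hu
        have hu' : u ∈ ({⟨sp t i, sp_mem _⟩, ⟨ce t i, ce_mem ht _⟩} :
            Set (flower t).edgeSet) := by rw [← hclassB i]; exact hu
        right
        rw [hG, lineGraph_adj_iff_exists]
        rcases hu' with rfl | rfl
        · exact ⟨by intro h; rw [Subtype.ext_iff] at h; rw [hv] at h; simp [sr, sp, ce, pe, Sym2.eq_iff] at h,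
            ⟨none, by rw [hv]; simp [sr], by simp [sp]⟩⟩
        · exact ⟨by intro h; rw [Subtype.ext_iff] at h; rw [hv] at h; simp [sr, sp, ce, pe, Sym2.eq_iff] at h,
            ⟨some (Sum.inl i), by rw [hv]; simp [sr], by simp [ce]⟩⟩
      · -- v = sp i dominates class A i = {sr (i+1), pe i}
        refine ⟨⟨i.val, by have := ZMod.val_lt i; omega⟩,
          ⟨⟨pe t i, pe_mem _⟩, by apply Fin.ext; show colNat t (pe t i) = i.val; simp⟩, ?_⟩
        intro u hu
        have hu' : u ∈ ({⟨sr t (i+1), sr_mem _⟩, ⟨pe t i, pe_mem _⟩} :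
            Set (flower t).edgeSet) := by rw [← hclassA i]; exact hu
        right
        rw [hG, lineGraph_adj_iff_exists]
        rcases hu' with rfl | rfl
        · exact ⟨by intro h; rw [Subtype.ext_iff] at h; rw [hv] at h; simp [sr, sp, ce, pe, Sym2.eq_iff] at h,
            ⟨none, by rw [hv]; simp [sp], by simp [sr]⟩⟩
        · exact ⟨by intro h; rw [Subtype.ext_iff] at h; rw [hv] at h; simp [sr, sp, ce, pe, Sym2.eq_iff] at h,
            ⟨some (Sum.inr i), by rw [hv]; simp [sp], by simp [pe]⟩⟩
      · -- v = ce i dominates class A i = {sr (i+1), pe i}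
        refine ⟨⟨i.val, by have := ZMod.val_lt i; omega⟩,
          ⟨⟨pe t i, pe_mem _⟩, by apply Fin.ext; show colNat t (pe t i) = i.val; simp⟩, ?_⟩
        intro u hu
        have hu' : u ∈ ({⟨sr t (i+1), sr_mem _⟩, ⟨pe t i, pe_mem _⟩} :
            Set (flower t).edgeSet) := by rw [← hclassA i]; exact hu
        right
        rw [hG, lineGraph_adj_iff_exists]
        rcases hu' with rfl | rfl
        · exact ⟨by intro h; rw [Subtype.ext_iff] at h; rw [hv] at h; simp [sr, sp, ce, pe, Sym2.eq_iff] at h,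
            ⟨some (Sum.inl (i+1)), by rw [hv]; simp [ce], by simp [sr]⟩⟩
        · exact ⟨by intro h; rw [Subtype.ext_iff] at h; rw [hv] at h; simp [sr, sp, ce, pe, Sym2.eq_iff] at h,
            ⟨some (Sum.inl i), by rw [hv]; simp [ce], by simp [pe]⟩⟩
      · -- v = pe i dominates class B i = {sp i, ce i}
        refine ⟨⟨t + i.val, by have := ZMod.val_lt i; omega⟩,
          ⟨⟨sp t i, sp_mem _⟩, by apply Fin.ext; show colNat t (sp t i) = t + i.val; simp⟩, ?_⟩
        intro u hu
        have hu' : u ∈ ({⟨sp t i, sp_mem _⟩, ⟨ce t i, ce_mem ht _⟩} :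
            Set (flower t).edgeSet) := by rw [← hclassB i]; exact hu
        right
        rw [hG, lineGraph_adj_iff_exists]
        rcases hu' with rfl | rfl
        · exact ⟨by intro h; rw [Subtype.ext_iff] at h; rw [hv] at h; simp [sr, sp, ce, pe, Sym2.eq_iff] at h,
            ⟨some (Sum.inr i), by rw [hv]; simp [pe], by simp [sp]⟩⟩
        · exact ⟨by intro h; rw [Subtype.ext_iff] at h; rw [hv] at h; simp [sr, sp, ce, pe, Sym2.eq_iff] at h,
            ⟨some (Sum.inl i), by rw [hv]; simp [pe], by simp [ce]⟩⟩
    · -- equitability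
      intro i j
      rw [hncard i, hncard j]
      omega
  -- lower bound
  have hlow : ∀ n ∈ {n : ℕ | ∃ c : (flower t).edgeSet → Fin n, IsEDColoring G c}, 2 * t ≤ n := by
    rintro n ⟨c', hc', -, -⟩
    have hspoke : ∀ z : ZMod t ⊕ ZMod t, s(none, some z) ∈ (flower t).edgeSet := by
      intro z
      rw [SimpleGraph.mem_edgeSet, flower, fromRel_adj]
      exact ⟨by simp, Or.inl (Or.inl ⟨z, rfl, rfl⟩)⟩
    let φ : ZMod t ⊕ ZMod t → Fin n := fun z => c' ⟨s(none, some z), hspoke z⟩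
    have hinj : Function.Injective φ := by
      intro z z' h
      by_contra hne
      refine hc' (u := ⟨s(none, some z), hspoke z⟩) (v := ⟨s(none, some z'), hspoke z'⟩) ?_ h
      rw [hG, lineGraph_adj_iff_exists]
      refine ⟨?_, ⟨none, by simp, by simp⟩⟩
      intro hh
      apply hne
      have := congrArg Subtype.val hh
      simp only [Sym2.eq_iff] at this
      rcases this with ⟨-, h2⟩ | ⟨h1, -⟩
      · exact Option.some_injective _ h2
      · cases h1
    have := Fintype.card_le_of_injective φ hinj
    simpa [ZMod.card, two_mul] using this
  exact le_antisymm (Nat.sInf_le hmem) (le_csInf ⟨2 * t, hmem⟩ hlow)
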